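/- Let X be a nonnegative random variable with E[X] = μ < ∞ satisfying the Gaussian tail bound P(X > u) ≤ exp(-(u-μ)²/2) for all u ≥ μ. Then for every α > 1, E[X^α] ≤ μ^α + max{1, 2^{α-2}}·α·√(π/2)·(μ^{α-1} + E[|N|^{α-1}]), where N is a standard normal random variable. -/

import Mathlib

open MeasureTheory ProbabilityTheory Real Set
open scoped NNReal ENNReal

/-!
Layer cake: `E[X^α] = α ∫₀^∞ t^(α-1) P(X > t) dt`. On `(0, μ]` the probability is at most `1`,
which contributes `μ^α`. On `(μ, ∞)` substitute `t = μ + y`, use the Gaussian tail and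
`(μ + y)^(α-1) ≤ max 1 2^(α-2) (μ^(α-1) + y^(α-1))`; what remains are the half-Gaussian integrals
`∫₀^∞ e^(-y²/2) dy = √(π/2)` and `∫₀^∞ y^(α-1) e^(-y²/2) dy = √(π/2) E|N|^(α-1)`.
-/

lemma Real.rpow_add_le_max_mul_add_rpow {a b p : ℝ} (ha : 0 ≤ a) (hb : 0 ≤ b) (hp : 0 ≤ p) :
    (a + b) ^ p ≤ max 1 ((2 : ℝ) ^ (p - 1)) * (a ^ p + b ^ p) := by
  have hsum : 0 ≤ a ^ p + b ^ p := by positivity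
  rcases le_total p 1 with hp1 | hp1
  · calc (a + b) ^ p ≤ a ^ p + b ^ p := rpow_add_le_add_rpow ha hb hp hp1
      _ ≤ _ := le_mul_of_one_le_left hsum (le_max_left _ _)
  · lift a to ℝ≥0 using ha
    lift b to ℝ≥0 using hb
    calc ((a : ℝ) + b) ^ p ≤ (2 : ℝ) ^ (p - 1) * (a ^ p + b ^ p) := by
          exact_mod_cast NNReal.rpow_add_le_mul_rpow_add_rpow a b hp1
      _ ≤ _ := mul_le_mul_of_nonneg_right (le_max_right _ _) hsum

lemma setLIntegral_Ioi_comp_add_right (f : ℝ → ℝ≥0∞) (a : ℝ) :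
    ∫⁻ y in Ioi 0, f (y + a) = ∫⁻ t in Ioi a, f t := by
  have hpre : (· + a) ⁻¹' Ioi a = Ioi 0 := by ext; simp
  rw [← hpre, (measurePreserving_add_right volume a).setLIntegral_comp_preimage_emb
    (measurableEmbedding_addRight a)]

lemma setLIntegral_Ioc_zero_rpow {m p : ℝ} (hm : 0 ≤ m) (hp : -1 < p) :
    ∫⁻ t in Ioc 0 m, ENNReal.ofReal (t ^ p) = ENNReal.ofReal (m ^ (p + 1) / (p + 1)) := by
  rw [← ofReal_integral_eq_lintegral_ofReal
      (intervalIntegral.intervalIntegrable_rpow' hp).1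
      ((ae_restrict_iff' measurableSet_Ioc).mpr (ae_of_all _ fun t ht ↦ rpow_nonneg ht.1.le p)),
    ← intervalIntegral.integral_of_le hm, integral_rpow (Or.inl hp),
    zero_rpow (by linarith : p + 1 ≠ 0), sub_zero]

section LayerCake

variable {Ω : Type*} [MeasurableSpace Ω] {P : Measure Ω} [IsProbabilityMeasure P]
  {X : Ω → ℝ} {m α : ℝ} {g : ℝ → ℝ}

lemma lintegral_rpow_le_of_tail_le (hX0 : 0 ≤ᵐ[P] X) (hXm : AEMeasurable X P) (hm : 0 ≤ m)
    (hα : 0 < α) (htail : ∀ y > 0, P.real {ω | y + m < X ω} ≤ g y) :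
    ∫⁻ ω, ENNReal.ofReal (X ω ^ α) ∂P ≤
      ENNReal.ofReal (m ^ α) + ENNReal.ofReal α *
        ∫⁻ y in Ioi 0, ENNReal.ofReal (g y * (y + m) ^ (α - 1)) := by
  rw [lintegral_rpow_eq_lintegral_meas_lt_mul P hX0 hXm hα]
  nth_rw 1 [← Ioc_union_Ioi_eq_Ioi hm]
  rw [lintegral_union measurableSet_Ioi (Ioc_disjoint_Ioi (le_refl m)), mul_add]
  gcongr ?_ + ?_
  · calc _ ≤ ENNReal.ofReal α * ∫⁻ t in Ioc 0 m, ENNReal.ofReal (t ^ (α - 1)) := by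
          gcongr with t
          exact mul_le_of_le_one_left' prob_le_one
      _ = ENNReal.ofReal (m ^ α) := by
          rw [setLIntegral_Ioc_zero_rpow hm (by linarith), sub_add_cancel,
            ← ENNReal.ofReal_mul hα.le, mul_div_cancel₀ _ hα.ne']
  · rw [← setLIntegral_Ioi_comp_add_right]
    refine mul_le_mul_right (setLIntegral_mono' measurableSet_Ioi fun y hy ↦ ?_) _
    rw [ENNReal.ofReal_mul (measureReal_nonneg.trans (htail y hy)), ← ofReal_measureReal]
    gcongr
    exact htail y hy

lemma integral_rpow_le_of_tail_le (hX0 : 0 ≤ᵐ[P] X) (hXm : AEMeasurable X P) (hm : 0 ≤ m)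
    (hα : 0 < α) (htail : ∀ y > 0, P.real {ω | y + m < X ω} ≤ g y)
    (hg : IntegrableOn (fun y ↦ g y * (y + m) ^ (α - 1)) (Ioi 0)) :
    ∫ ω, X ω ^ α ∂P ≤ m ^ α + α * ∫ y in Ioi 0, g y * (y + m) ^ (α - 1) := by
  have hg0 : ∀ y ∈ Ioi (0 : ℝ), 0 ≤ g y * (y + m) ^ (α - 1) := fun y hy ↦
    mul_nonneg (measureReal_nonneg.trans (htail y hy))
      (rpow_nonneg (by linarith [mem_Ioi.mp hy]) _)
  have hI0 : 0 ≤ ∫ y in Ioi 0, g y * (y + m) ^ (α - 1) := setIntegral_nonneg measurableSet_Ioi hg0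
  rw [integral_eq_lintegral_of_nonneg_ae (hX0.mono fun ω h ↦ rpow_nonneg h α)
    (hXm.pow_const α).aestronglyMeasurable]
  refine ENNReal.toReal_le_of_le_ofReal (by positivity) ?_
  calc _ ≤ _ := lintegral_rpow_le_of_tail_le hX0 hXm hm hα htail
    _ = _ := by
      rw [← ofReal_integral_eq_lintegral_ofReal hg
          ((ae_restrict_iff' measurableSet_Ioi).mpr (ae_of_all _ hg0)),
        ← ENNReal.ofReal_mul hα.le, ← ENNReal.ofReal_add (by positivity) (by positivity)]

end LayerCake

lemma Real.sqrt_two_mul_pi : √(2 * π) = 2 * √(π / 2) := by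
  rw [show 2 * π = 2 ^ 2 * (π / 2) by ring, sqrt_mul (by positivity), sqrt_sq zero_le_two]

lemma Real.exp_neg_sq_div_two_eq (y : ℝ) : exp (-y ^ 2 / 2) = exp (-(1 / 2) * y ^ 2) := by
  ring_nf

lemma integral_Ioi_exp_neg_sq_div_two : ∫ y in Ioi (0 : ℝ), exp (-y ^ 2 / 2) = √(π / 2) := by
  simp_rw [exp_neg_sq_div_two_eq, integral_gaussian_Ioi, div_div_eq_mul_div, div_one,
    mul_comm π, sqrt_two_mul_pi]
  ring

lemma integral_Ioi_rpow_mul_exp_neg_sq_div_two (p : ℝ) :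
    ∫ y in Ioi 0, y ^ p * exp (-y ^ 2 / 2) = √(π / 2) * ∫ x, |x| ^ p ∂gaussianReal 0 1 := by
  have hpdf (x : ℝ) : gaussianPDFReal 0 1 x • |x| ^ p =
      (√(2 * π))⁻¹ * (fun y ↦ y ^ p * exp (-y ^ 2 / 2)) |x| := by
    simp [gaussianPDFReal, sq_abs]
    ring
  rw [integral_gaussianReal_eq_integral_smul one_ne_zero, funext hpdf, integral_const_mul,
    integral_comp_abs (f := fun y ↦ y ^ p * exp (-y ^ 2 / 2)), sqrt_two_mul_pi]
  have : 0 < √(π / 2) := sqrt_pos.mpr (by positivity)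
  field_simp

section ShiftedGaussian

variable {m p : ℝ}

lemma integrable_exp_neg_sq_div_two : Integrable fun y : ℝ ↦ exp (-y ^ 2 / 2) := by
  simpa only [exp_neg_sq_div_two_eq] using integrable_exp_neg_mul_sq one_half_pos

lemma integrableOn_Ioi_rpow_mul_exp_neg_sq_div_two (hp : -1 < p) :
    IntegrableOn (fun y : ℝ ↦ y ^ p * exp (-y ^ 2 / 2)) (Ioi 0) := by
  simp_rw [exp_neg_sq_div_two_eq]
  exact integrableOn_rpow_mul_exp_neg_mul_sq one_half_pos hp

lemma exp_neg_sq_div_two_mul_rpow_add_le (hm : 0 ≤ m) (hp : 0 ≤ p) {y : ℝ} (hy : 0 ≤ y) :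
    exp (-y ^ 2 / 2) * (y + m) ^ p ≤
      max 1 ((2 : ℝ) ^ (p - 1)) * m ^ p * exp (-y ^ 2 / 2) +
        max 1 ((2 : ℝ) ^ (p - 1)) * (y ^ p * exp (-y ^ 2 / 2)) := by
  calc exp (-y ^ 2 / 2) * (y + m) ^ p
      ≤ exp (-y ^ 2 / 2) * (max 1 ((2 : ℝ) ^ (p - 1)) * (m ^ p + y ^ p)) := by
        rw [add_comm y]
        gcongr
        exact rpow_add_le_max_mul_add_rpow hm hy hp
    _ = _ := by ring

lemma integrableOn_Ioi_exp_neg_sq_div_two_mul_rpow_add (hm : 0 ≤ m) (hp : 0 ≤ p) :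
    IntegrableOn (fun y : ℝ ↦ exp (-y ^ 2 / 2) * (y + m) ^ p) (Ioi 0) := by
  set c := max 1 ((2 : ℝ) ^ (p - 1))
  have hmajorant : IntegrableOn
      (fun y : ℝ ↦ c * m ^ p * exp (-y ^ 2 / 2) + c * (y ^ p * exp (-y ^ 2 / 2))) (Ioi 0) :=
    (integrable_exp_neg_sq_div_two.integrableOn.const_mul _).add
      ((integrableOn_Ioi_rpow_mul_exp_neg_sq_div_two (by linarith)).const_mul _)
  refine hmajorant.mono' (by fun_prop)
    ((ae_restrict_iff' measurableSet_Ioi).mpr (ae_of_all _ fun y hy ↦ ?_))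
  rw [norm_of_nonneg (by have : 0 < y := hy; positivity)]
  exact exp_neg_sq_div_two_mul_rpow_add_le hm hp (le_of_lt hy)

lemma integral_Ioi_exp_neg_sq_div_two_mul_rpow_add_le (hm : 0 ≤ m) (hp : 0 ≤ p) :
    ∫ y in Ioi 0, exp (-y ^ 2 / 2) * (y + m) ^ p ≤
      max 1 ((2 : ℝ) ^ (p - 1)) * √(π / 2) * (m ^ p + ∫ x, |x| ^ p ∂gaussianReal 0 1) := by
  set c := max 1 ((2 : ℝ) ^ (p - 1))
  have hexp := integrable_exp_neg_sq_div_two.integrableOn (s := Ioi 0)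
  have hpow := integrableOn_Ioi_rpow_mul_exp_neg_sq_div_two (by linarith : -1 < p)
  calc ∫ y in Ioi 0, exp (-y ^ 2 / 2) * (y + m) ^ p
      ≤ ∫ y in Ioi 0, c * m ^ p * exp (-y ^ 2 / 2) + c * (y ^ p * exp (-y ^ 2 / 2)) :=
        setIntegral_mono_on (integrableOn_Ioi_exp_neg_sq_div_two_mul_rpow_add hm hp)
          ((hexp.const_mul _).add (hpow.const_mul _)) measurableSet_Ioi
          fun y hy ↦ exp_neg_sq_div_two_mul_rpow_add_le hm hp (le_of_lt hy)
    _ = c * √(π / 2) * (m ^ p + ∫ x, |x| ^ p ∂gaussianReal 0 1) := by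
      rw [integral_add (hexp.const_mul _) (hpow.const_mul _), integral_const_mul,
        integral_const_mul, integral_Ioi_exp_neg_sq_div_two,
        integral_Ioi_rpow_mul_exp_neg_sq_div_two]
      ring

end ShiftedGaussian

theorem moment_bound_borell_general {Ω : Type*} [MeasureSpace Ω]
    [IsProbabilityMeasure (ℙ : Measure Ω)]
    (X : Ω → ℝ) (hXm : Measurable X) (hX0 : ∀ ω, 0 ≤ X ω)
    (μ : ℝ) (hμ : μ = ∫ ω, X ω)
    (htail : ∀ u ≥ μ, ((ℙ : Measure Ω) {ω | u < X ω}).toReal ≤ Real.exp (-(u - μ)^2/2))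
    (α : ℝ) (hα : 1 < α) :
    (∫ ω, X ω ^ α) ≤
      μ ^ α + max 1 ((2:ℝ) ^ (α - 2)) * α * Real.sqrt (Real.pi/2) *
        (μ ^ (α - 1) + ∫ x, |x| ^ (α - 1) ∂(gaussianReal 0 1)) := by
  have hμ0 : 0 ≤ μ := hμ ▸ integral_nonneg hX0
  have hp : 0 ≤ α - 1 := by linarith
  have htail' (y : ℝ) (hy : 0 < y) :
      (ℙ : Measure Ω).real {ω | y + μ < X ω} ≤ exp (-y ^ 2 / 2) := by
    simpa [measureReal_def] using htail (y + μ) (by linarith)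
  calc ∫ ω, X ω ^ α
      ≤ μ ^ α + α * ∫ y in Ioi 0, exp (-y ^ 2 / 2) * (y + μ) ^ (α - 1) :=
        integral_rpow_le_of_tail_le (ae_of_all _ hX0) hXm.aemeasurable hμ0 (by linarith) htail'
          (integrableOn_Ioi_exp_neg_sq_div_two_mul_rpow_add hμ0 hp)
    _ ≤ μ ^ α + α * (max 1 ((2 : ℝ) ^ (α - 1 - 1)) * √(π / 2) *
          (μ ^ (α - 1) + ∫ x, |x| ^ (α - 1) ∂gaussianReal 0 1)) := by
        gcongr
        exact integral_Ioi_exp_neg_sq_div_two_mul_rpow_add_le hμ0 hp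
    _ = _ := by
        rw [show α - 1 - 1 = α - 2 by ring]
        ring

/-- If X ≥ 0 has mean μ and Gaussian tail P(X > u) ≤ e^{-(u-μ)²/2} for u ≥ μ, then for α > 1,
E[X^α] ≤ μ^α + max{1, 2^{α-2}}·α·√(π/2)·(μ^{α-1} + E[|N|^{α-1}]). -/
theorem moment_bound_borell {Ω : Type*} [MeasureSpace Ω]
    [IsProbabilityMeasure (ℙ : Measure Ω)]
    (X : Ω → ℝ) (hXm : Measurable X) (hX0 : ∀ ω, 0 ≤ X ω) (hXint : Integrable X)
    (μ : ℝ) (hμ : μ = ∫ ω, X ω)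
    (htail : ∀ u ≥ μ, ((ℙ : Measure Ω) {ω | u < X ω}).toReal ≤ Real.exp (-(u - μ)^2/2))
    (α : ℝ) (hα : 1 < α) :
    (∫ ω, X ω ^ α) ≤
      μ ^ α + max 1 ((2:ℝ) ^ (α - 2)) * α * Real.sqrt (Real.pi/2) *
        (μ ^ (α - 1) + ∫ x, |x| ^ (α - 1) ∂(gaussianReal 0 1)) :=
  moment_bound_borell_general X hXm hX0 μ hμ htail α hα
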